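/- Let ε > 0 and let h satisfy −2 < h < −5/2 + 1/(2ε²), and let Φ_ε be the rational map Φ_ε(x,y) = ( (ε(ε+1)x² + εxy + (1−2ε)x)/D(x,y), (ε(2ε−4)x² − ε(ε+3)xy + 6εx − εy² + (2ε+1)y)/D(x,y) ), D(x,y) = 2ε²x² − ε(ε+1)x − εy + 2ε + 1. Then the points P₊ = (0, 2 + √(4+2h)) and P₋ = (0, 2 − √(4+2h)) lie on the invariant conic C_h and are fixed points of Φ_ε. Moreover P₋ is an attractor and P₊ a repellor on C_h: for every point p ∈ C_h \ {P₊} whose entire forward orbit under Φ_ε is defined, the iterates Φ_εⁿ(p) converge to P₋ as n → ∞. -/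
import Mathlib


/-- Denominator of the Kahan–Hirota–Kimura map `Φ_ε` of the system
`ẋ = x(x+y-2)`, `ẏ = -x(2x+y-3)`. -/
noncomputable def Dps (ε x y : ℝ) : ℝ :=
  2 * ε ^ 2 * x ^ 2 - ε * (ε + 1) * x - ε * y + 2 * ε + 1

/-- The Kahan–Hirota–Kimura map `Φ_ε` of the system `ẋ = x(x+y-2)`, `ẏ = -x(2x+y-3)`. -/
noncomputable def Phips (ε : ℝ) (q : ℝ × ℝ) : ℝ × ℝ :=
  ((ε * (ε + 1) * q.1 ^ 2 + ε * q.1 * q.2 + (1 - 2 * ε) * q.1) / Dps ε q.1 q.2,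
   (ε * (2 * ε - 4) * q.1 ^ 2 - ε * (ε + 3) * q.1 * q.2 + 6 * ε * q.1 - ε * q.2 ^ 2
      + (2 * ε + 1) * q.2) / Dps ε q.1 q.2)

/-- The invariant conic `C_h` of `Φ_ε`. -/
def Cps (ε h : ℝ) : Set (ℝ × ℝ) :=
  {q : ℝ × ℝ | (2 - 5 * ε ^ 2 - 2 * ε ^ 2 * h) * q.1 ^ 2 + 2 * q.1 * q.2 + q.2 ^ 2
      - 6 * q.1 - 4 * q.2 - 2 * h = 0}

lemma phips_eq (ε x y : ℝ) : Phips ε (x, y) =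
    ((ε * (ε + 1) * x ^ 2 + ε * x * y + (1 - 2 * ε) * x) / Dps ε x y,
     (ε * (2 * ε - 4) * x ^ 2 - ε * (ε + 3) * x * y + 6 * ε * x - ε * y ^ 2
      + (2 * ε + 1) * y) / Dps ε x y) := rfl

/-- Tangent line to the conic at `P₋ = (0, 2-s)`. -/
noncomputable def TmL (s : ℝ) (q : ℝ × ℝ) : ℝ := (-2 - 2 * s) * q.1 - 2 * s * (q.2 - (2 - s))
/-- Tangent line to the conic at `P₊ = (0, 2+s)`. -/
noncomputable def TpL (s : ℝ) (q : ℝ × ℝ) : ℝ := (2 * s - 2) * q.1 + 2 * s * (q.2 - (2 + s))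

/-- invariance of the conic -/
lemma aux_inv (ε h x y : ℝ) (hD : Dps ε x y ≠ 0)
    (hF : (2 - 5 * ε ^ 2 - 2 * ε ^ 2 * h) * x ^ 2 + 2 * x * y + y ^ 2 - 6 * x - 4 * y - 2 * h = 0) :
    (2 - 5 * ε ^ 2 - 2 * ε ^ 2 * h) * (Phips ε (x, y)).1 ^ 2
      + 2 * (Phips ε (x, y)).1 * (Phips ε (x, y)).2 + (Phips ε (x, y)).2 ^ 2
      - 6 * (Phips ε (x, y)).1 - 4 * (Phips ε (x, y)).2 - 2 * h = 0 := by
  rw [phips_eq]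
  set D := Dps ε x y with hDdef
  set N1 := ε * (ε + 1) * x ^ 2 + ε * x * y + (1 - 2 * ε) * x with hN1
  set N2 := ε * (2 * ε - 4) * x ^ 2 - ε * (ε + 3) * x * y + 6 * ε * x - ε * y ^ 2
      + (2 * ε + 1) * y with hN2
  have h1 : N1 / D * D = N1 := div_mul_cancel₀ _ hD
  have h2 : N2 / D * D = N2 := div_mul_cancel₀ _ hD
  have key : ((2 - 5 * ε ^ 2 - 2 * ε ^ 2 * h) * (N1 / D) ^ 2
      + 2 * (N1 / D) * (N2 / D) + (N2 / D) ^ 2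
      - 6 * (N1 / D) - 4 * (N2 / D) - 2 * h) * D ^ 2 = 0 := by
    have expand : ((2 - 5 * ε ^ 2 - 2 * ε ^ 2 * h) * (N1 / D) ^ 2
        + 2 * (N1 / D) * (N2 / D) + (N2 / D) ^ 2
        - 6 * (N1 / D) - 4 * (N2 / D) - 2 * h) * D ^ 2
        = (2 - 5 * ε ^ 2 - 2 * ε ^ 2 * h) * (N1 / D * D) ^ 2
          + 2 * (N1 / D * D) * (N2 / D * D) + (N2 / D * D) ^ 2
          - 6 * (N1 / D * D) * D - 4 * (N2 / D * D) * D - 2 * h * D ^ 2 := by ring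
    rw [expand, h1, h2, hN1, hN2, hDdef]
    simp only [Dps]
    linear_combination ((1 + 4*ε + 4*ε^2) + (-2*ε - 4*ε^2)*y + ε^2*y^2
      + (-2*ε - 6*ε^2 - 4*ε^3)*x + (2*ε^2 + 2*ε^3)*x*y + (5*ε^2 + 2*ε^3 + ε^4)*x^2) * hF
  have hD2 : D ^ 2 ≠ 0 := pow_ne_zero _ hD
  exact (mul_eq_zero.mp key).resolve_right hD2

/-- key multiplier identity -/
lemma aux_key (ε s h x y : ℝ) (hD : Dps ε x y ≠ 0) (hs2 : s ^ 2 = 4 + 2 * h)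
    (hF : (2 - 5 * ε ^ 2 - 2 * ε ^ 2 * h) * x ^ 2 + 2 * x * y + y ^ 2 - 6 * x - 4 * y - 2 * h = 0) :
    TmL s (Phips ε (x, y)) * TpL s (x, y) * (1 + ε * s) ^ 2
      = (1 - ε * s) ^ 2 * TmL s (x, y) * TpL s (Phips ε (x, y)) := by
  rw [phips_eq]
  set D := Dps ε x y with hDdef
  set N1 := ε * (ε + 1) * x ^ 2 + ε * x * y + (1 - 2 * ε) * x with hN1
  set N2 := ε * (2 * ε - 4) * x ^ 2 - ε * (ε + 3) * x * y + 6 * ε * x - ε * y ^ 2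
      + (2 * ε + 1) * y with hN2
  have h1 : N1 / D * D = N1 := div_mul_cancel₀ _ hD
  have h2 : N2 / D * D = N2 := div_mul_cancel₀ _ hD
  simp only [TmL, TpL]
  have key : ((((-2 - 2 * s) * (N1 / D) - 2 * s * (N2 / D - (2 - s)))
        * ((2 * s - 2) * x + 2 * s * (y - (2 + s))) * (1 + ε * s) ^ 2)
      - ((1 - ε * s) ^ 2 * ((-2 - 2 * s) * x - 2 * s * (y - (2 - s)))
        * ((2 * s - 2) * (N1 / D) + 2 * s * (N2 / D - (2 + s))))) * D = 0 := by
    have expand : ((((-2 - 2 * s) * (N1 / D) - 2 * s * (N2 / D - (2 - s)))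
        * ((2 * s - 2) * x + 2 * s * (y - (2 + s))) * (1 + ε * s) ^ 2)
      - ((1 - ε * s) ^ 2 * ((-2 - 2 * s) * x - 2 * s * (y - (2 - s)))
        * ((2 * s - 2) * (N1 / D) + 2 * s * (N2 / D - (2 + s))))) * D
      = (((-2 - 2 * s) * (N1 / D * D) - 2 * s * (N2 / D * D - (2 - s) * D))
        * ((2 * s - 2) * x + 2 * s * (y - (2 + s))) * (1 + ε * s) ^ 2)
      - ((1 - ε * s) ^ 2 * ((-2 - 2 * s) * x - 2 * s * (y - (2 - s)))
        * ((2 * s - 2) * (N1 / D * D) + 2 * s * (N2 / D * D - (2 + s) * D))) := by ring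
    rw [expand, h1, h2, hN1, hN2, hDdef]
    simp only [Dps]
    linear_combination
      (-16*ε*s^3 - 32*ε^2*s^3 + 16*ε^2*s^3*y - 16*ε*s*x + 16*ε^2*s^3*x) * hF
      - (-16*ε*s^3 - 32*ε^2*s^3 + 16*ε^2*s^3*y - 16*ε*s*x + 16*ε^2*s^3*x) * (ε^2*x^2 + 1) * hs2
  have := (mul_eq_zero.mp key).resolve_right hD
  linarith [this]

/-- tangency at `P₊` -/
lemma aux_tanp (ε s h x y : ℝ) (hε : 0 < ε) (hs0 : 0 < s) (hes : ε * s < 1)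
    (hs2 : s ^ 2 = 4 + 2 * h)
    (hF : (2 - 5 * ε ^ 2 - 2 * ε ^ 2 * h) * x ^ 2 + 2 * x * y + y ^ 2 - 6 * x - 4 * y - 2 * h = 0)
    (hTp : TpL s (x, y) = 0) : x = 0 ∧ y = 2 + s := by
  simp only [TpL] at hTp
  have hx2 : 4 * (1 + s ^ 2) * (1 - ε ^ 2 * s ^ 2) * x ^ 2 = 0 := by
    linear_combination (4 * s ^ 2) * hF - (4 * s ^ 2 * (ε ^ 2 * x ^ 2 + 1)) * hs2
      - (-4*s + 2*s^2 + 2*s*y + 2*x + 2*s*x) * hTp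
  have hκ : 0 < 4 * (1 + s ^ 2) * (1 - ε ^ 2 * s ^ 2) := by
    nlinarith [mul_pos (sub_pos.mpr hes) (by positivity : (0:ℝ) < 1 + ε * s), sq_nonneg s]
  have hx : x = 0 := by
    have : x ^ 2 = 0 := by
      rcases mul_eq_zero.mp hx2 with h' | h'
      · exact absurd h' (ne_of_gt hκ)
      · exact h'
    exact pow_eq_zero_iff (by norm_num) |>.mp this
  refine ⟨hx, ?_⟩
  rw [hx] at hTp
  have : 2 * s * (y - (2 + s)) = 0 := by linarith
  rcases mul_eq_zero.mp this with h' | h'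
  · linarith
  · linarith

/-- tangency at `P₋` -/
lemma aux_tanm (ε s h x y : ℝ) (hε : 0 < ε) (hs0 : 0 < s) (hes : ε * s < 1)
    (hs2 : s ^ 2 = 4 + 2 * h)
    (hF : (2 - 5 * ε ^ 2 - 2 * ε ^ 2 * h) * x ^ 2 + 2 * x * y + y ^ 2 - 6 * x - 4 * y - 2 * h = 0)
    (hTm : TmL s (x, y) = 0) : x = 0 ∧ y = 2 - s := by
  simp only [TmL] at hTm
  have hx2 : 4 * (1 + s ^ 2) * (1 - ε ^ 2 * s ^ 2) * x ^ 2 = 0 := by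
    linear_combination (4 * s ^ 2) * hF - (4 * s ^ 2 * (ε ^ 2 * x ^ 2 + 1)) * hs2
      - (4*s + 2*s^2 - 2*s*y + 2*x - 2*s*x) * hTm
  have hκ : 0 < 4 * (1 + s ^ 2) * (1 - ε ^ 2 * s ^ 2) := by
    nlinarith [mul_pos (sub_pos.mpr hes) (by positivity : (0:ℝ) < 1 + ε * s), sq_nonneg s]
  have hx : x = 0 := by
    have : x ^ 2 = 0 := by
      rcases mul_eq_zero.mp hx2 with h' | h'
      · exact absurd h' (ne_of_gt hκ)
      · exact h'
    exact pow_eq_zero_iff (by norm_num) |>.mp this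
  refine ⟨hx, ?_⟩
  rw [hx] at hTm
  have : 2 * s * (y - (2 - s)) = 0 := by linarith
  rcases mul_eq_zero.mp this with h' | h'
  · linarith
  · linarith

/-- size bounds on the conic -/
lemma aux_bnd (ε h x y : ℝ) (ha : 0 < 1 - 5*ε^2 - 2*ε^2*h)
    (hF : (2 - 5 * ε ^ 2 - 2 * ε ^ 2 * h) * x ^ 2 + 2 * x * y + y ^ 2 - 6 * x - 4 * y - 2 * h = 0) :
    x ^ 2 ≤ (4 + 2*(2*h+4)*(1 - 5*ε^2 - 2*ε^2*h))/(1 - 5*ε^2 - 2*ε^2*h)^2 ∧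
    y ^ 2 ≤ 3*(2*((4 + 2*(2*h+4)*(1 - 5*ε^2 - 2*ε^2*h))/(1 - 5*ε^2 - 2*ε^2*h)^2) + (2*h+4) + 5) := by
  set a := 1 - 5*ε^2 - 2*ε^2*h with hadef
  set c0 := 2*h + 4 with hc0def
  have hF2 : (x + y - 2)^2 + a*x^2 - 2*x - c0 = 0 := by
    rw [hadef, hc0def]; linear_combination hF
  have h1 : a^2*x^2 ≤ 4 + 2*c0*a := by
    nlinarith [sq_nonneg (a*x - 2), mul_nonneg ha.le (sq_nonneg (x + y - 2)), sq_nonneg (x+y-2)]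
  have hBx : x^2 ≤ (4 + 2*c0*a)/a^2 := by
    rw [le_div_iff₀ (by positivity)]; nlinarith [h1]
  refine ⟨hBx, ?_⟩
  have hxy : (x + y - 2)^2 ≤ (4 + 2*c0*a)/a^2 + 1 + c0 := by
    nlinarith [hBx, mul_nonneg ha.le (sq_nonneg x), sq_nonneg (x - 1)]
  nlinarith [hxy, hBx, sq_nonneg (2*x + y - 2), sq_nonneg (x + y - 4), sq_nonneg (x + 2)]

lemma aux_abs (A B C x y Mx My : ℝ) (hx : |x| ≤ Mx) (hy : |y| ≤ My) :
    |A * x + B * y + C| ≤ |A| * Mx + |B| * My + |C| := by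
  calc |A * x + B * y + C| ≤ |A * x + B * y| + |C| := abs_add_le _ _
    _ ≤ |A * x| + |B * y| + |C| := by linarith [abs_add_le (A * x) (B * y)]
    _ = |A| * |x| + |B| * |y| + |C| := by rw [abs_mul, abs_mul]
    _ ≤ |A| * Mx + |B| * My + |C| :=
        add_le_add (add_le_add (mul_le_mul_of_nonneg_left hx (abs_nonneg A))
          (mul_le_mul_of_nonneg_left hy (abs_nonneg B))) le_rfl

set_option maxHeartbeats 1600000 in
/-- For `ε > 0` and `-2 < h < -5/2 + 1/(2ε²)`, the points `P₊ = (0, 2 + √(4+2h))` and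
`P₋ = (0, 2 - √(4+2h))` lie on the invariant conic `C_h` and are fixed points of `Φ_ε`;
moreover `P₋` attracts every point of `C_h \ {P₊}` whose entire forward orbit under
`Φ_ε` is defined. -/
theorem stmt_6 (ε h : ℝ) (hε : 0 < ε) (hh1 : -2 < h) (hh2 : h < -5 / 2 + 1 / (2 * ε ^ 2)) :
    ((0 : ℝ), 2 + Real.sqrt (4 + 2 * h)) ∈ Cps ε h ∧
    ((0 : ℝ), 2 - Real.sqrt (4 + 2 * h)) ∈ Cps ε h ∧
    Phips ε ((0 : ℝ), 2 + Real.sqrt (4 + 2 * h)) = ((0 : ℝ), 2 + Real.sqrt (4 + 2 * h)) ∧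
    Phips ε ((0 : ℝ), 2 - Real.sqrt (4 + 2 * h)) = ((0 : ℝ), 2 - Real.sqrt (4 + 2 * h)) ∧
    ∀ q ∈ Cps ε h, q ≠ ((0 : ℝ), 2 + Real.sqrt (4 + 2 * h)) →
      (∀ n : ℕ, Dps ε ((Phips ε)^[n] q).1 ((Phips ε)^[n] q).2 ≠ 0) →
      Filter.Tendsto (fun n : ℕ => (Phips ε)^[n] q) Filter.atTop
        (nhds ((0 : ℝ), 2 - Real.sqrt (4 + 2 * h))) := by
  set s := Real.sqrt (4 + 2 * h) with hsdef
  have h4 : (0:ℝ) < 4 + 2 * h := by linarith only [hh1]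
  have hs2 : s ^ 2 = 4 + 2 * h := Real.sq_sqrt h4.le
  have hs0 : 0 < s := Real.sqrt_pos.mpr h4
  have hε2 : (0:ℝ) < 2 * ε ^ 2 := by positivity
  have hkey2 : (h + 5/2) * (2 * ε ^ 2) < 1 := by
    have h' : h + 5/2 < 1 / (2 * ε ^ 2) := by linarith only [hh2]
    calc (h + 5/2) * (2 * ε ^ 2) < (1 / (2 * ε ^ 2)) * (2 * ε ^ 2) :=
          mul_lt_mul_of_pos_right h' hε2
      _ = 1 := by field_simp
  have hes2 : (ε * s) ^ 2 < 1 := by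
    have he : ε ^ 2 * s ^ 2 = ε ^ 2 * (4 + 2 * h) := by rw [hs2]
    nlinarith only [sq_nonneg ε, he, hkey2]
  have hes : ε * s < 1 := by nlinarith only [mul_pos hε hs0, hes2]
  have hes0 : 0 < ε * s := mul_pos hε hs0
  have h1es : (0:ℝ) < 1 + ε * s := by linarith only [hes0]
  -- membership
  have hmemp : ((0 : ℝ), 2 + s) ∈ Cps ε h := by
    show (2 - 5 * ε ^ 2 - 2 * ε ^ 2 * h) * (0:ℝ) ^ 2 + 2 * 0 * (2 + s) + (2 + s) ^ 2
      - 6 * 0 - 4 * (2 + s) - 2 * h = 0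
    linear_combination hs2
  have hmemm : ((0 : ℝ), 2 - s) ∈ Cps ε h := by
    show (2 - 5 * ε ^ 2 - 2 * ε ^ 2 * h) * (0:ℝ) ^ 2 + 2 * 0 * (2 - s) + (2 - s) ^ 2
      - 6 * 0 - 4 * (2 - s) - 2 * h = 0
    linear_combination hs2
  -- fixed points
  have hDp : Dps ε 0 (2 + s) = 1 - ε * s := by simp only [Dps]; ring
  have hDm : Dps ε 0 (2 - s) = 1 + ε * s := by simp only [Dps]; ring
  have hDpne : Dps ε 0 (2 + s) ≠ 0 := by rw [hDp]; intro hc; linarith only [hc, hes]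
  have hDmne : Dps ε 0 (2 - s) ≠ 0 := by rw [hDm]; intro hc; linarith only [hc, hes0]
  have hfixp : Phips ε ((0 : ℝ), 2 + s) = ((0 : ℝ), 2 + s) := by
    rw [phips_eq, Prod.mk.injEq]
    constructor
    · rw [div_eq_iff hDpne]; ring
    · rw [div_eq_iff hDpne, hDp]; ring
  have hfixm : Phips ε ((0 : ℝ), 2 - s) = ((0 : ℝ), 2 - s) := by
    rw [phips_eq, Prod.mk.injEq]
    constructor
    · rw [div_eq_iff hDmne]; ring
    · rw [div_eq_iff hDmne, hDm]; ring
  refine ⟨hmemp, hmemm, hfixp, hfixm, ?_⟩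
  -- main attraction statement
  intro q hq hne hDorb
  set Q : ℕ → ℝ × ℝ := fun n => (Phips ε)^[n] q with hQdef
  have hQ0 : Q 0 = q := rfl
  have hQsucc : ∀ n, Q (n + 1) = Phips ε (Q n) := fun n => Function.iterate_succ_apply' _ _ _
  simp only [Cps, Set.mem_setOf_eq] at hq
  -- orbit stays on the conic
  have hCn : ∀ n, (2 - 5 * ε ^ 2 - 2 * ε ^ 2 * h) * (Q n).1 ^ 2 + 2 * (Q n).1 * (Q n).2
      + (Q n).2 ^ 2 - 6 * (Q n).1 - 4 * (Q n).2 - 2 * h = 0 := by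
    intro n
    induction n with
    | zero => exact hq
    | succ n ih =>
      have := aux_inv ε h (Q n).1 (Q n).2 (hDorb n) ih
      rw [Prod.mk.eta, ← hQsucc n] at this
      exact this
  -- the orbit never reaches the tangent line at P₊
  have hTpn : ∀ n, TpL s (Q n) ≠ 0 := by
    intro n
    induction n with
    | zero =>
      intro h0
      obtain ⟨hx, hy⟩ := aux_tanp ε s h (Q 0).1 (Q 0).2 hε hs0 hes hs2 (hCn 0)
        (by rw [Prod.mk.eta]; exact h0)
      exact hne (Prod.ext hx hy)
    | succ n ih =>
      intro h0
      have hkey := aux_key ε s h (Q n).1 (Q n).2 (hDorb n) hs2 (hCn n)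
      rw [Prod.mk.eta, ← hQsucc n] at hkey
      rw [h0, mul_zero] at hkey
      obtain ⟨hx, hy⟩ := aux_tanp ε s h (Q (n+1)).1 (Q (n+1)).2 hε hs0 hes hs2 (hCn (n+1))
        (by rw [Prod.mk.eta]; exact h0)
      have hQn1 : Q (n + 1) = ((0 : ℝ), 2 + s) := Prod.ext hx hy
      have hTmval : TmL s (Q (n+1)) = -4 * s ^ 2 := by
        rw [hQn1]; simp only [TmL]; ring
      rw [hTmval] at hkey
      have : TpL s (Q n) = 0 := by
        rcases mul_eq_zero.mp hkey with h' | h'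
        · rcases mul_eq_zero.mp h' with h'' | h''
          · exfalso; nlinarith only [h'', pow_pos hs0 2]
          · exact h''
        · exfalso; nlinarith only [h', hes0, sq_nonneg (ε * s)]
      exact ih this
  -- the multiplier
  set c : ℝ := ((1 - ε * s) / (1 + ε * s)) ^ 2 with hcdef
  have hc_eq : c * (1 + ε * s) ^ 2 = (1 - ε * s) ^ 2 := by
    rw [hcdef, div_pow]
    exact div_mul_cancel₀ _ (pow_ne_zero 2 (ne_of_gt h1es))
  have hc0 : 0 ≤ c := by rw [hcdef]; positivity
  have hc1 : c < 1 := by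
    have hlt : (1 - ε * s) / (1 + ε * s) < 1 := (div_lt_one h1es).mpr (by linarith only [hes0])
    have hge : 0 ≤ (1 - ε * s) / (1 + ε * s) :=
      div_nonneg (by linarith only [hes]) (by linarith only [hes0])
    rw [hcdef]
    nlinarith only [hlt, hge]
  -- the exact geometric decay of the ratio
  have hAB : ∀ n, TmL s (Q n) * TpL s q = c ^ n * TmL s q * TpL s (Q n) := by
    intro n
    induction n with
    | zero => rw [hQ0]; ring
    | succ n ih =>
      have hkey := aux_key ε s h (Q n).1 (Q n).2 (hDorb n) hs2 (hCn n)
      rw [Prod.mk.eta, ← hQsucc n] at hkey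
      have hBn : TpL s (Q n) ≠ 0 := hTpn n
      apply mul_right_cancel₀ (b := TpL s (Q n) * (1 + ε * s) ^ 2)
        (mul_ne_zero hBn (pow_ne_zero _ (ne_of_gt h1es)))
      linear_combination (TpL s q) * hkey - (TmL s (Q n)) * (TpL s (Q (n+1))) * (TpL s q) * hc_eq
        + c * (1 + ε * s) ^ 2 * (TpL s (Q (n+1))) * ih
  -- uniform bounds on the conic
  have ha : 0 < 1 - 5*ε^2 - 2*ε^2*h := by nlinarith only [hkey2, sq_nonneg ε]
  set B : ℝ := (4 + 2*(2*h+4)*(1 - 5*ε^2 - 2*ε^2*h))/(1 - 5*ε^2 - 2*ε^2*h)^2 with hBdef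
  set Mx : ℝ := (B + 1) / 2 with hMxdef
  set My : ℝ := (3*(2*B + (2*h+4) + 5) + 1) / 2 with hMydef
  have hxab : ∀ n, |(Q n).1| ≤ Mx := by
    intro n
    have hb := (aux_bnd ε h (Q n).1 (Q n).2 ha (hCn n)).1
    rw [hMxdef, hBdef]
    nlinarith only [hb, sq_nonneg (|(Q n).1| - 1), sq_abs (Q n).1]
  have hyab : ∀ n, |(Q n).2| ≤ My := by
    intro n
    have hb := (aux_bnd ε h (Q n).1 (Q n).2 ha (hCn n)).2
    rw [hMydef, hBdef]
    nlinarith only [hb, sq_nonneg (|(Q n).2| - 1), sq_abs (Q n).2]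
  have hMx0 : 0 ≤ Mx := le_trans (abs_nonneg _) (hxab 0)
  have hMy0 : 0 ≤ My := le_trans (abs_nonneg _) (hyab 0)
  -- bound on TpL along the orbit
  set MTp : ℝ := |2*s - 2| * Mx + |2*s| * My + |(-(2*s*(2+s)))| with hMTpdef
  have hTpb : ∀ n, |TpL s (Q n)| ≤ MTp := by
    intro n
    have heq : TpL s (Q n) = (2*s - 2) * (Q n).1 + (2*s) * (Q n).2 + (-(2*s*(2+s))) := by
      simp only [TpL]; ring
    rw [heq, hMTpdef]
    exact aux_abs _ _ _ _ _ _ _ (hxab n) (hyab n)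
  -- bound on TmL along the orbit : |TmL (Q n)| ≤ CT * c^n
  set CT : ℝ := |TmL s q / TpL s q| * MTp with hCTdef
  have hMTp0 : 0 ≤ MTp := le_trans (abs_nonneg _) (hTpb 0)
  have hCT0 : 0 ≤ CT := mul_nonneg (abs_nonneg _) hMTp0
  have hTmb : ∀ n, |TmL s (Q n)| ≤ CT * c ^ n := by
    intro n
    have hq0 : TpL s q ≠ 0 := by rw [← hQ0]; exact hTpn 0
    have h5 : TmL s q / TpL s q * TpL s q = TmL s q := div_mul_cancel₀ _ hq0
    have hexp : TmL s (Q n) = c ^ n * (TmL s q / TpL s q) * TpL s (Q n) := by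
      apply mul_right_cancel₀ hq0
      calc TmL s (Q n) * TpL s q = c ^ n * TmL s q * TpL s (Q n) := hAB n
        _ = c ^ n * (TmL s q / TpL s q * TpL s q) * TpL s (Q n) := by rw [h5]
        _ = c ^ n * (TmL s q / TpL s q) * TpL s (Q n) * TpL s q := by ring
    rw [hexp, abs_mul, abs_mul, abs_pow, abs_of_nonneg hc0, hCTdef]
    calc c ^ n * |TmL s q / TpL s q| * |TpL s (Q n)|
        ≤ c ^ n * |TmL s q / TpL s q| * MTp :=
          mul_le_mul_of_nonneg_left (hTpb n)
            (mul_nonneg (pow_nonneg hc0 n) (abs_nonneg _))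
      _ = |TmL s q / TpL s q| * MTp * c ^ n := by ring
  -- x-coordinate bound
  set κ : ℝ := 4 * (1 + s ^ 2) * (1 - ε ^ 2 * s ^ 2) with hκdef
  have hκ0 : 0 < κ := by
    rw [hκdef]
    nlinarith only [mul_pos (sub_pos.mpr hes) h1es, sq_nonneg s, hes0]
  set Mβ : ℝ := |2 - 2*s| * Mx + |(-(2*s))| * My + |4*s + 2*s^2| with hMβdef
  have hMβ0 : 0 ≤ Mβ := by
    rw [hMβdef]
    exact add_nonneg (add_nonneg (mul_nonneg (abs_nonneg _) hMx0)
      (mul_nonneg (abs_nonneg _) hMy0)) (abs_nonneg _)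
  have hx2b : ∀ n, (Q n).1 ^ 2 ≤ (Mβ * CT / κ) * c ^ n := by
    intro n
    have hid : κ * (Q n).1 ^ 2
        = -((2 - 2*s) * (Q n).1 + (-(2*s)) * (Q n).2 + (4*s + 2*s^2)) * TmL s (Q n) := by
      simp only [TmL, hκdef]
      linear_combination (4 * s ^ 2) * (hCn n) - (4 * s ^ 2 * (ε ^ 2 * (Q n).1 ^ 2 + 1)) * hs2
    have hβb : |(2 - 2*s) * (Q n).1 + (-(2*s)) * (Q n).2 + (4*s + 2*s^2)| ≤ Mβ := by
      rw [hMβdef]; exact aux_abs _ _ _ _ _ _ _ (hxab n) (hyab n)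
    have habs : κ * (Q n).1 ^ 2 ≤ Mβ * (CT * c ^ n) := by
      calc κ * (Q n).1 ^ 2 = |κ * (Q n).1 ^ 2| :=
            (abs_of_nonneg (mul_nonneg hκ0.le (sq_nonneg _))).symm
        _ = |(2 - 2*s) * (Q n).1 + (-(2*s)) * (Q n).2 + (4*s + 2*s^2)| * |TmL s (Q n)| := by
            rw [hid, abs_mul, abs_neg]
        _ ≤ Mβ * (CT * c ^ n) :=
            mul_le_mul hβb (hTmb n) (abs_nonneg _) hMβ0
    rw [div_mul_eq_mul_div, le_div_iff₀ hκ0]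
    nlinarith only [habs]
  -- convergence rates
  set d : ℝ := Real.sqrt c with hddef
  have hd0 : 0 ≤ d := Real.sqrt_nonneg c
  have hd2 : d ^ 2 = c := Real.sq_sqrt hc0
  have hd1 : d < 1 := by nlinarith only [hd2, hd0, hc1]
  have hcd : ∀ n : ℕ, c ^ n ≤ d ^ n := by
    intro n
    apply pow_le_pow_left₀ hc0
    nlinarith only [hd2, mul_nonneg hd0 (by linarith only [hd1] : (0:ℝ) ≤ 1 - d)]
  set K1 : ℝ := Real.sqrt (Mβ * CT / κ) with hK1def
  have hK10 : 0 ≤ K1 := Real.sqrt_nonneg _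
  have hK1sq : K1 ^ 2 = Mβ * CT / κ :=
    Real.sq_sqrt (div_nonneg (mul_nonneg hMβ0 hCT0) hκ0.le)
  have hxabs : ∀ n, |(Q n).1| ≤ K1 * d ^ n := by
    intro n
    have h1 : (Q n).1 ^ 2 ≤ (K1 * d ^ n) ^ 2 := by
      have heq2 : (K1 * d ^ n) ^ 2 = (Mβ * CT / κ) * c ^ n := by
        rw [mul_pow, hK1sq, ← pow_mul, mul_comm n 2, pow_mul, hd2]
      rw [heq2]; exact hx2b n
    calc |(Q n).1| = Real.sqrt ((Q n).1 ^ 2) := (Real.sqrt_sq_eq_abs _).symm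
      _ ≤ Real.sqrt ((K1 * d ^ n) ^ 2) := Real.sqrt_le_sqrt h1
      _ = K1 * d ^ n := Real.sqrt_sq (mul_nonneg hK10 (pow_nonneg hd0 n))
  set K2 : ℝ := (CT + (2 + 2*s) * K1) / (2 * s) with hK2def
  have hyabs : ∀ n, |(Q n).2 - (2 - s)| ≤ K2 * d ^ n := by
    intro n
    have hrel : 2 * s * ((Q n).2 - (2 - s)) = -(TmL s (Q n)) - (2 + 2*s) * (Q n).1 := by
      simp only [TmL]; ring
    have habs : 2 * s * |(Q n).2 - (2 - s)| ≤ CT * c ^ n + (2 + 2*s) * (K1 * d ^ n) := by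
      have h2 : |2 * s * ((Q n).2 - (2 - s))| ≤ |TmL s (Q n)| + (2 + 2*s) * |(Q n).1| := by
        rw [hrel]
        calc |(-(TmL s (Q n))) - (2 + 2*s) * (Q n).1|
            ≤ |(-(TmL s (Q n)))| + |(2 + 2*s) * (Q n).1| := abs_sub _ _
          _ = |TmL s (Q n)| + |2 + 2*s| * |(Q n).1| := by rw [abs_neg, abs_mul]
          _ = |TmL s (Q n)| + (2 + 2*s) * |(Q n).1| := by
              rw [abs_of_nonneg (by linarith only [hs0] : (0:ℝ) ≤ 2 + 2*s)]
      rw [abs_mul, abs_of_nonneg (by linarith only [hs0] : (0:ℝ) ≤ 2 * s)] at h2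
      have h3 := mul_le_mul_of_nonneg_left (hxabs n) (by linarith only [hs0] : (0:ℝ) ≤ 2 + 2*s)
      linarith only [h2, hTmb n, h3]
    have h6 : CT * c ^ n ≤ CT * d ^ n := mul_le_mul_of_nonneg_left (hcd n) hCT0
    rw [hK2def, div_mul_eq_mul_div, le_div_iff₀ (by linarith only [hs0] : (0:ℝ) < 2 * s)]
    calc |(Q n).2 - (2 - s)| * (2 * s) = 2 * s * |(Q n).2 - (2 - s)| := by ring
      _ ≤ CT * c ^ n + (2 + 2*s) * (K1 * d ^ n) := habs
      _ ≤ CT * d ^ n + (2 + 2*s) * (K1 * d ^ n) := by linarith only [h6]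
      _ = (CT + (2 + 2*s) * K1) * d ^ n := by ring
  -- assemble the convergence
  have hdlim : Filter.Tendsto (fun n : ℕ => d ^ n) Filter.atTop (nhds 0) :=
    tendsto_pow_atTop_nhds_zero_of_lt_one hd0 hd1
  have hxlim : Filter.Tendsto (fun n : ℕ => (Q n).1) Filter.atTop (nhds 0) := by
    have hK1lim : Filter.Tendsto (fun n : ℕ => K1 * d ^ n) Filter.atTop (nhds 0) := by
      have := hdlim.const_mul K1
      simpa using this
    have hK1limneg : Filter.Tendsto (fun n : ℕ => -(K1 * d ^ n)) Filter.atTop (nhds 0) := by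
      have := hK1lim.neg; simpa using this
    apply tendsto_of_tendsto_of_tendsto_of_le_of_le hK1limneg hK1lim
    · intro n; exact (abs_le.mp (hxabs n)).1
    · intro n; exact (abs_le.mp (hxabs n)).2
  have hylim : Filter.Tendsto (fun n : ℕ => (Q n).2) Filter.atTop (nhds (2 - s)) := by
    have hK2lim : Filter.Tendsto (fun n : ℕ => K2 * d ^ n) Filter.atTop (nhds 0) := by
      have := hdlim.const_mul K2
      simpa using this
    have hK2limneg : Filter.Tendsto (fun n : ℕ => -(K2 * d ^ n)) Filter.atTop (nhds 0) := by
      have := hK2lim.neg; simpa using this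
    have hdiff : Filter.Tendsto (fun n : ℕ => (Q n).2 - (2 - s)) Filter.atTop (nhds 0) := by
      apply tendsto_of_tendsto_of_tendsto_of_le_of_le hK2limneg hK2lim
      · intro n; exact (abs_le.mp (hyabs n)).1
      · intro n; exact (abs_le.mp (hyabs n)).2
    have := hdiff.add_const (2 - s)
    simpa using this
  exact hxlim.prodMk_nhds hylim
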